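/- arXiv:2011.05562 — 4 statements merged into one kernel-verified Lean document; each statement's English description precedes it below -/
import Mathlib

section
/- Let d₁, d₂ be positive integers, A a d₁×d₁ real symmetric matrix, D a d₂×d₂ real symmetric matrix, and Z an arbitrary d₁×d₂ real matrix. Let J = [[A, Z], [−Zᵀ, D]]. Then every non-real eigenvalue μ of J satisfies (λmin(A) + λmin(D))/2 ≤ Re(μ) ≤ (λmax(A) + λmax(D))/2 and |Im(μ)| ≤ ‖Z‖. -/
/-!
Let `J (x, y) = μ (x, y)` with `x, y` complex. Testing the two block rows against `x` and `y`
gives `x*Ax + c = μ‖x‖²` and `y*Dy - c̄ = μ‖y‖²` with `c = x*Zy`. As `x*Ax` and `y*Dy` are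
real, the imaginary parts give `Im c = Im μ ‖x‖² = Im μ ‖y‖²`, so `‖x‖ = ‖y‖` once `Im μ ≠ 0`.
Adding the real parts, `2 Re μ ‖x‖² = Re x*Ax + Re y*Dy`, which the Rayleigh bounds of `A` and
`D` pin between `(λmin(A) + λmin(D))‖x‖²` and `(λmax(A) + λmax(D))‖x‖²`; and
`|Im μ| ‖x‖² = |Im c| ≤ ‖x‖ ‖Z‖ ‖y‖ = ‖Z‖ ‖x‖²`.
-/

open Matrix

/-- Smallest eigenvalue of a Hermitian (real symmetric) matrix. -/
noncomputable def lamMin {n : Type*} [Fintype n] [DecidableEq n] {A : Matrix n n ℝ}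
    (hA : A.IsHermitian) : ℝ := ⨅ i, hA.eigenvalues i

/-- Largest eigenvalue of a Hermitian (real symmetric) matrix. -/
noncomputable def lamMax {n : Type*} [Fintype n] [DecidableEq n] {A : Matrix n n ℝ}
    (hA : A.IsHermitian) : ℝ := ⨆ i, hA.eigenvalues i

/-- The ℓ²→ℓ² operator norm of a rectangular real matrix. -/
noncomputable def l2OpNorm {m n : ℕ} (Z : Matrix (Fin m) (Fin n) ℝ) : ℝ :=
  ‖LinearMap.toContinuousLinearMap (Matrix.toEuclideanLin Z)‖

open WithLp
open scoped ComplexOrder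

namespace Matrix

theorem exists_mulVec_eq_smul_of_mem_spectrum {n K : Type*} [Fintype n] [DecidableEq n]
    [Field K] {M : Matrix n n K} {μ : K} (h : μ ∈ spectrum K M) : ∃ v ≠ 0, M *ᵥ v = μ • v := by
  rw [← spectrum_toLin', ← Module.End.hasEigenvalue_iff_mem_spectrum] at h
  obtain ⟨v, hv⟩ := h.exists_hasEigenvector
  exact ⟨v, hv.2, by simpa using hv.apply_eq_smul⟩

section RCLike

variable {m n 𝕜 : Type*} [Fintype m] [Fintype n] [RCLike 𝕜]

theorem star_dotProduct_self_eq_norm_sq (x : n → 𝕜) :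
    star x ⬝ᵥ x = (‖toLp 2 x‖ : 𝕜) ^ 2 := by
  rw [← inner_self_eq_norm_sq_to_K, EuclideanSpace.inner_toLp_toLp, dotProduct_comm]

theorem norm_star_dotProduct_le (x w : n → 𝕜) :
    ‖star x ⬝ᵥ w‖ ≤ ‖toLp 2 x‖ * ‖toLp 2 w‖ := by
  rw [dotProduct_comm, ← EuclideanSpace.inner_toLp_toLp]
  exact norm_inner_le_norm _ _

theorem star_dotProduct_conjTranspose_mulVec (Z : Matrix m n 𝕜) (x : m → 𝕜) (y : n → 𝕜) :
    star y ⬝ᵥ Zᴴ *ᵥ x = star (star x ⬝ᵥ Z *ᵥ y) := by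
  rw [star_dotProduct, star_mulVec, conjTranspose_conjTranspose, dotProduct_mulVec]

theorem norm_toLp_pos_of_sum_elim_ne_zero {x : m → 𝕜} {y : n → 𝕜} (hv : Sum.elim x y ≠ 0)
    (hxy : ‖toLp 2 x‖ = ‖toLp 2 y‖) : 0 < ‖toLp 2 x‖ := by
  refine (norm_nonneg _).lt_of_ne' fun hx0 ↦ hv ?_
  have hy0 := hxy ▸ hx0
  rw [norm_eq_zero, WithLp.toLp_eq_zero] at hx0 hy0
  rw [hx0, hy0, Sum.elim_zero_zero]

variable [DecidableEq n] {A : Matrix n n 𝕜} {c : ℝ}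

theorem IsHermitian.posSemidef_sub_algebraMap (hA : A.IsHermitian)
    (hc : ∀ i, c ≤ hA.eigenvalues i) : (A - algebraMap ℝ (Matrix n n 𝕜) c).PosSemidef := by
  have h : (A - algebraMap ℝ (Matrix n n 𝕜) c).IsHermitian :=
    hA.sub (by simp [IsHermitian, Algebra.algebraMap_eq_smul_one])
  rw [h.posSemidef_iff_eigenvalues_nonneg]
  intro i
  have hi := h.eigenvalues_mem_spectrum_real i
  rw [← spectrum.sub_singleton_eq, hA.spectrum_real_eq_range_eigenvalues] at hi
  obtain ⟨_, ⟨j, rfl⟩, _, rfl, hj⟩ := hi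
  simp [← hj, hc j]

theorem IsHermitian.posSemidef_algebraMap_sub (hA : A.IsHermitian)
    (hc : ∀ i, hA.eigenvalues i ≤ c) : (algebraMap ℝ (Matrix n n 𝕜) c - A).PosSemidef := by
  have h : (algebraMap ℝ (Matrix n n 𝕜) c - A).IsHermitian :=
    IsHermitian.sub (by simp [IsHermitian, Algebra.algebraMap_eq_smul_one]) hA
  rw [h.posSemidef_iff_eigenvalues_nonneg]
  intro i
  have hi := h.eigenvalues_mem_spectrum_real i
  rw [← spectrum.singleton_sub_eq, hA.spectrum_real_eq_range_eigenvalues] at hi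
  obtain ⟨_, rfl, _, ⟨j, rfl⟩, hj⟩ := hi
  simp [← hj, hc j]

theorem IsHermitian.mul_norm_sq_le_re_star_dotProduct_mulVec (hA : A.IsHermitian)
    (hc : ∀ i, c ≤ hA.eigenvalues i) (x : n → 𝕜) :
    c * ‖toLp 2 x‖ ^ 2 ≤ RCLike.re (star x ⬝ᵥ A *ᵥ x) := by
  have h := (hA.posSemidef_sub_algebraMap hc).dotProduct_mulVec_nonneg x
  rw [sub_mulVec, dotProduct_sub, Algebra.algebraMap_eq_smul_one, smul_mulVec, one_mulVec,
    dotProduct_smul, star_dotProduct_self_eq_norm_sq, sub_nonneg, RCLike.le_iff_re_im] at h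
  simpa [RCLike.smul_re] using h.1

theorem IsHermitian.re_star_dotProduct_mulVec_le_mul_norm_sq (hA : A.IsHermitian)
    (hc : ∀ i, hA.eigenvalues i ≤ c) (x : n → 𝕜) :
    RCLike.re (star x ⬝ᵥ A *ᵥ x) ≤ c * ‖toLp 2 x‖ ^ 2 := by
  have h := (hA.posSemidef_algebraMap_sub hc).dotProduct_mulVec_nonneg x
  rw [sub_mulVec, dotProduct_sub, Algebra.algebraMap_eq_smul_one, smul_mulVec, one_mulVec,
    dotProduct_smul, star_dotProduct_self_eq_norm_sq, sub_nonneg, RCLike.le_iff_re_im] at h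
  simpa [RCLike.smul_re] using h.1

end RCLike

section Complex

variable {m n : Type*} [Fintype m] [Fintype n]

theorem quadratic_forms_of_fromBlocks_mulVec_eq_smul {A : Matrix m m ℂ} {D : Matrix n n ℂ}
    {Z : Matrix m n ℂ} {x : m → ℂ} {y : n → ℂ} {μ : ℂ}
    (h : fromBlocks A Z (-Zᴴ) D *ᵥ Sum.elim x y = μ • Sum.elim x y) :
    star x ⬝ᵥ A *ᵥ x + star x ⬝ᵥ Z *ᵥ y = μ * ‖toLp 2 x‖ ^ 2 ∧
      star y ⬝ᵥ D *ᵥ y - star (star x ⬝ᵥ Z *ᵥ y) = μ * ‖toLp 2 y‖ ^ 2 := by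
  have hx : A *ᵥ x + Z *ᵥ y = μ • x :=
    funext fun i ↦ by simpa [fromBlocks_mulVec] using congrFun h (Sum.inl i)
  have hy : -Zᴴ *ᵥ x + D *ᵥ y = μ • y :=
    funext fun j ↦ by simpa [fromBlocks_mulVec] using congrFun h (Sum.inr j)
  constructor
  · rw [← dotProduct_add, hx, dotProduct_smul, star_dotProduct_self_eq_norm_sq, smul_eq_mul]
    rfl
  · rw [← star_dotProduct_conjTranspose_mulVec, sub_eq_neg_add, ← dotProduct_neg, ← neg_mulVec,
      ← dotProduct_add, hy, dotProduct_smul, star_dotProduct_self_eq_norm_sq, smul_eq_mul]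
    rfl

theorem IsHermitian.fromBlocks_eigenvector {A : Matrix m m ℂ} {D : Matrix n n ℂ}
    (hA : A.IsHermitian) (hD : D.IsHermitian) {Z : Matrix m n ℂ} {x : m → ℂ} {y : n → ℂ}
    {μ : ℂ} (h : Matrix.fromBlocks A Z (-Zᴴ) D *ᵥ Sum.elim x y = μ • Sum.elim x y)
    (hμ : μ.im ≠ 0) :
    ‖toLp 2 x‖ = ‖toLp 2 y‖ ∧
      2 * μ.re * ‖toLp 2 x‖ ^ 2 = (star x ⬝ᵥ A *ᵥ x).re + (star y ⬝ᵥ D *ᵥ y).re ∧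
      |μ.im| * ‖toLp 2 x‖ ^ 2 ≤ ‖star x ⬝ᵥ Z *ᵥ y‖ := by
  obtain ⟨hx, hy⟩ := quadratic_forms_of_fromBlocks_mulVec_eq_smul h
  have hAx : (star x ⬝ᵥ A *ᵥ x).im = 0 := hA.im_star_dotProduct_mulVec_self x
  have hDy : (star y ⬝ᵥ D *ᵥ y).im = 0 := hD.im_star_dotProduct_mulVec_self y
  have hx_im := congrArg Complex.im hx
  have hy_im := congrArg Complex.im hy
  have hx_re := congrArg Complex.re hx
  have hy_re := congrArg Complex.re hy
  simp only [Complex.add_im, Complex.sub_im, Complex.add_re, Complex.sub_re, Complex.star_def,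
    Complex.conj_im, Complex.conj_re, Complex.mul_im, Complex.mul_re, ← Complex.ofReal_pow,
    Complex.ofReal_re, Complex.ofReal_im, hAx, hDy, mul_zero, zero_add, sub_zero, zero_sub,
    neg_neg] at hx_im hy_im hx_re hy_re
  have hnorm_sq : ‖toLp 2 x‖ ^ 2 = ‖toLp 2 y‖ ^ 2 := mul_left_cancel₀ hμ (by linarith)
  rw [← hnorm_sq] at hy_re
  refine ⟨(pow_left_inj₀ (norm_nonneg _) (norm_nonneg _) two_ne_zero).mp hnorm_sq,
    by linarith, ?_⟩
  calc |μ.im| * ‖toLp 2 x‖ ^ 2 = |(star x ⬝ᵥ Z *ᵥ y).im| := by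
        rw [← abs_of_nonneg (sq_nonneg ‖toLp 2 x‖), ← abs_mul]; congr 1; linarith
    _ ≤ ‖star x ⬝ᵥ Z *ᵥ y‖ := Complex.abs_im_le_norm _

end Complex

section Real

variable {m n : Type*}

theorem re_map_ofReal_mulVec [Fintype n] (M : Matrix m n ℝ) (v : n → ℂ) :
    (fun i ↦ ((M.map (algebraMap ℝ ℂ) *ᵥ v) i).re) = M *ᵥ fun j ↦ (v j).re := by
  ext i
  simp [mulVec, dotProduct, Complex.re_sum]

theorem im_map_ofReal_mulVec [Fintype n] (M : Matrix m n ℝ) (v : n → ℂ) :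
    (fun i ↦ ((M.map (algebraMap ℝ ℂ) *ᵥ v) i).im) = M *ᵥ fun j ↦ (v j).im := by
  ext i
  simp [mulVec, dotProduct, Complex.im_sum]

theorem IsHermitian.map_ofReal {A : Matrix n n ℝ} (hA : A.IsHermitian) :
    (A.map (algebraMap ℝ ℂ)).IsHermitian :=
  hA.map _ fun _ ↦ by simp

variable [Fintype n] [DecidableEq n] {A : Matrix n n ℝ}

theorem IsHermitian.eigenvalues_map_ofReal_mem_range (hA : A.IsHermitian) (i : n) :
    hA.map_ofReal.eigenvalues i ∈ Set.range hA.eigenvalues := by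
  rw [← hA.spectrum_real_eq_range_eigenvalues]
  exact AlgHom.spectrum_apply_subset (Algebra.ofId ℝ ℂ).mapMatrix A
    (hA.map_ofReal.eigenvalues_mem_spectrum_real i)

end Real

end Matrix

theorem norm_toLp_sq_eq_re_add_im {n : Type*} [Fintype n] (v : n → ℂ) :
    ‖toLp 2 v‖ ^ 2 = ‖toLp 2 (fun i ↦ (v i).re)‖ ^ 2 + ‖toLp 2 (fun i ↦ (v i).im)‖ ^ 2 := by
  rw [EuclideanSpace.norm_sq_eq, EuclideanSpace.norm_sq_eq, EuclideanSpace.norm_sq_eq,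
    ← Finset.sum_add_distrib]
  refine Finset.sum_congr rfl fun i _ ↦ ?_
  rw [Complex.sq_norm, Complex.normSq_apply, Real.norm_eq_abs, Real.norm_eq_abs, sq_abs, sq_abs,
    sq, sq]

theorem lamMin_mul_norm_sq_le {n : Type*} [Fintype n] [DecidableEq n] {A : Matrix n n ℝ}
    (hA : A.IsHermitian) (x : n → ℂ) :
    lamMin hA * ‖toLp 2 x‖ ^ 2 ≤ (star x ⬝ᵥ A.map (algebraMap ℝ ℂ) *ᵥ x).re := by
  refine hA.map_ofReal.mul_norm_sq_le_re_star_dotProduct_mulVec (fun i ↦ ?_) x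
  obtain ⟨j, hj⟩ := hA.eigenvalues_map_ofReal_mem_range i
  exact hj ▸ ciInf_le (Set.finite_range _).bddBelow j

theorem re_le_lamMax_mul_norm_sq {n : Type*} [Fintype n] [DecidableEq n] {A : Matrix n n ℝ}
    (hA : A.IsHermitian) (x : n → ℂ) :
    (star x ⬝ᵥ A.map (algebraMap ℝ ℂ) *ᵥ x).re ≤ lamMax hA * ‖toLp 2 x‖ ^ 2 := by
  refine hA.map_ofReal.re_star_dotProduct_mulVec_le_mul_norm_sq (fun i ↦ ?_) x
  obtain ⟨j, hj⟩ := hA.eigenvalues_map_ofReal_mem_range i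
  exact hj ▸ le_ciSup (Set.finite_range _).bddAbove j

theorem norm_toLp_mulVec_le {p q : ℕ} (Z : Matrix (Fin p) (Fin q) ℝ) (u : Fin q → ℝ) :
    ‖toLp 2 (Z *ᵥ u)‖ ≤ l2OpNorm Z * ‖toLp 2 u‖ :=
  (LinearMap.toContinuousLinearMap (Matrix.toEuclideanLin Z)).le_opNorm (toLp 2 u)

theorem norm_toLp_map_ofReal_mulVec_le {p q : ℕ} (Z : Matrix (Fin p) (Fin q) ℝ)
    (v : Fin q → ℂ) : ‖toLp 2 (Z.map (algebraMap ℝ ℂ) *ᵥ v)‖ ≤ l2OpNorm Z * ‖toLp 2 v‖ := by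
  have hZ : 0 ≤ l2OpNorm Z := norm_nonneg _
  refine pow_le_pow_iff_left₀ (norm_nonneg _) (by positivity) two_ne_zero |>.mp ?_
  rw [mul_pow, norm_toLp_sq_eq_re_add_im, norm_toLp_sq_eq_re_add_im v, mul_add,
    re_map_ofReal_mulVec, im_map_ofReal_mulVec, ← mul_pow, ← mul_pow]
  gcongr <;> exact norm_toLp_mulVec_le Z _

theorem norm_star_dotProduct_map_ofReal_mulVec_le {p q : ℕ} (Z : Matrix (Fin p) (Fin q) ℝ)
    (x : Fin p → ℂ) (y : Fin q → ℂ) :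
    ‖star x ⬝ᵥ Z.map (algebraMap ℝ ℂ) *ᵥ y‖ ≤ l2OpNorm Z * (‖toLp 2 x‖ * ‖toLp 2 y‖) :=
  calc _ ≤ ‖toLp 2 x‖ * (l2OpNorm Z * ‖toLp 2 y‖) :=
        (norm_star_dotProduct_le _ _).trans (by gcongr; exact norm_toLp_map_ofReal_mulVec_le Z y)
    _ = l2OpNorm Z * (‖toLp 2 x‖ * ‖toLp 2 y‖) := by ring

theorem stmt1_general {d₁ d₂ : ℕ}
    (A : Matrix (Fin d₁) (Fin d₁) ℝ) (D : Matrix (Fin d₂) (Fin d₂) ℝ)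
    (Z : Matrix (Fin d₁) (Fin d₂) ℝ)
    (hA : A.IsHermitian) (hD : D.IsHermitian)
    (μ : ℂ)
    (hμ : μ ∈ spectrum ℂ ((Matrix.fromBlocks A Z (-Zᵀ) D).map (algebraMap ℝ ℂ)))
    (hμim : μ.im ≠ 0) :
    (lamMin hA + lamMin hD) / 2 ≤ μ.re ∧ μ.re ≤ (lamMax hA + lamMax hD) / 2 ∧
      |μ.im| ≤ l2OpNorm Z := by
  obtain ⟨v, hv0, hv⟩ := exists_mulVec_eq_smul_of_mem_spectrum hμ
  rw [← Sum.elim_comp_inl_inr v, fromBlocks_map,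
    show (-Zᵀ).map (algebraMap ℝ ℂ) = -(Z.map (algebraMap ℝ ℂ))ᴴ by ext; simp] at hv
  rw [← Sum.elim_comp_inl_inr v] at hv0
  set x := v ∘ Sum.inl
  set y := v ∘ Sum.inr
  obtain ⟨hxy, hre, him⟩ := hA.map_ofReal.fromBlocks_eigenvector hD.map_ofReal hv hμim
  have hx2 : 0 < ‖toLp 2 x‖ ^ 2 := pow_pos (norm_toLp_pos_of_sum_elim_ne_zero hv0 hxy) 2
  have hZ := norm_star_dotProduct_map_ofReal_mulVec_le Z x y
  have hAx := lamMin_mul_norm_sq_le hA x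
  have hDy := lamMin_mul_norm_sq_le hD y
  have hAx' := re_le_lamMax_mul_norm_sq hA x
  have hDy' := re_le_lamMax_mul_norm_sq hD y
  rw [← hxy] at hZ hDy hDy'
  refine ⟨?_, ?_, ?_⟩
  · rw [div_le_iff₀ two_pos]
    exact le_of_mul_le_mul_right (by linarith) hx2
  · rw [le_div_iff₀ two_pos]
    exact le_of_mul_le_mul_right (by linarith) hx2
  · exact le_of_mul_le_mul_right (him.trans (hZ.trans_eq (by ring))) hx2

theorem stmt1 {d₁ d₂ : ℕ} (hd₁ : 0 < d₁) (hd₂ : 0 < d₂)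
    (A : Matrix (Fin d₁) (Fin d₁) ℝ) (D : Matrix (Fin d₂) (Fin d₂) ℝ)
    (Z : Matrix (Fin d₁) (Fin d₂) ℝ)
    (hA : A.IsHermitian) (hD : D.IsHermitian)
    (μ : ℂ)
    (hμ : μ ∈ spectrum ℂ ((Matrix.fromBlocks A Z (-Zᵀ) D).map (algebraMap ℝ ℂ)))
    (hμim : μ.im ≠ 0) :
    (lamMin hA + lamMin hD) / 2 ≤ μ.re ∧ μ.re ≤ (lamMax hA + lamMax hD) / 2 ∧
      |μ.im| ≤ l2OpNorm Z :=
  stmt1_general A D Z hA hD μ hμ hμim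
end

section
/- Let d₁, d₂ be positive integers, A a d₁×d₁ real symmetric negative definite matrix, D a d₂×d₂ real symmetric negative definite matrix, and Z an arbitrary d₁×d₂ real matrix. Then for every real τ > 0, the block matrix [[A, Z], [−τ·Zᵀ, τ·D]] is Hurwitz: every eigenvalue has strictly negative real part. -/
/-!
With `W = diag(τ I, I)` and `M = Λ J` the block matrix, `W M = τ J`, whose symmetric part
`τ (J + Jᵀ) / 2 = τ diag(A, D)` is negative definite: the skew-symmetric coupling `Z` drops
out. Hence `W` is a Lyapunov certificate for `M`: for an eigenvector `v` with eigenvalue `μ`,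
`v* (W M + (W M)ᴴ) v = 2 Re μ · v* W v`, where the left side is negative and `v* W v` positive.
-/

open Matrix

open scoped ComplexOrder

namespace Matrix

variable {m n : Type*} [Fintype m] [Fintype n]

theorem PosDef.fromBlocks_zero_zero {R : Type*} [Ring R] [PartialOrder R] [StarRing R]
    [IsOrderedAddMonoid R] {A : Matrix m m R} {D : Matrix n n R} (hA : A.PosDef)
    (hD : D.PosDef) : (fromBlocks A 0 0 D).PosDef := by
  refine PosDef.of_dotProduct_mulVec_pos
    (hA.isHermitian.fromBlocks conjTranspose_zero hD.isHermitian) fun x hx => ?_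
  have hA' := hA.posSemidef.dotProduct_mulVec_nonneg (x ∘ Sum.inl)
  have hD' := hD.posSemidef.dotProduct_mulVec_nonneg (x ∘ Sum.inr)
  simp only [fromBlocks_mulVec, zero_mulVec, add_zero, zero_add, dotProduct_block]
  by_cases hl : x ∘ Sum.inl = 0
  · refine add_pos_of_nonneg_of_pos hA' (hD.dotProduct_mulVec_pos fun hr => hx ?_)
    ext (i | i)
    exacts [congrFun hl i, congrFun hr i]
  · exact add_pos_of_pos_of_nonneg (hA.dotProduct_mulVec_pos hl) hD'

theorem PosDef.map_complex {P : Matrix n n ℝ} (hP : P.PosDef) :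
    (P.map (algebraMap ℝ ℂ)).PosDef := by
  refine PosDef.of_dotProduct_mulVec_pos
    (hP.isHermitian.map _ fun r => (Complex.conj_ofReal r).symm) fun z hz => ?_
  set x : n → ℝ := fun i => (z i).re
  set y : n → ℝ := fun i => (z i).im
  have hform : star z ⬝ᵥ P.map (algebraMap ℝ ℂ) *ᵥ z = ((x ⬝ᵥ P *ᵥ x + y ⬝ᵥ P *ᵥ y : ℝ) : ℂ) := by
    apply Complex.ext
    · simp [dotProduct, mulVec, Complex.re_sum, Finset.mul_sum, Finset.sum_add_distrib, x, y]
    · -- the cross terms `xᵀ P y` and `yᵀ P x` cancel because `P` is symmetric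
      simp only [dotProduct, mulVec, Complex.im_sum, Finset.mul_sum, x, y, Complex.ofReal_im]
      simp [← sub_eq_add_neg, sub_eq_zero]
      rw [Finset.sum_comm]
      refine Finset.sum_congr rfl fun i _ => Finset.sum_congr rfl fun j _ => ?_
      rw [← hP.isHermitian.apply i j, star_trivial]
      ring
  have hx := hP.posSemidef.dotProduct_mulVec_nonneg x
  have hy := hP.posSemidef.dotProduct_mulVec_nonneg y
  rw [star_trivial] at hx hy
  rw [hform, Complex.zero_lt_real]
  by_cases hx0 : x = 0
  · have hy0 : y ≠ 0 := fun hy0 =>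
      hz (funext fun i => Complex.ext (congrFun hx0 i) (congrFun hy0 i))
    simpa using add_pos_of_nonneg_of_pos hx (hP.dotProduct_mulVec_pos hy0)
  · simpa using add_pos_of_pos_of_nonneg (hP.dotProduct_mulVec_pos hx0) hy

variable [DecidableEq n]

theorem re_lt_zero_of_mem_spectrum_of_posDef {𝕜 : Type*} [RCLike 𝕜] {M W : Matrix n n 𝕜}
    (hW : W.PosDef) (hWM : (-(W * M + (W * M)ᴴ)).PosDef) {μ : 𝕜} (hμ : μ ∈ spectrum 𝕜 M) :
    RCLike.re μ < 0 := by
  rw [← spectrum_toLin', ← Module.End.hasEigenvalue_iff_mem_spectrum] at hμ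
  obtain ⟨v, hv⟩ := hμ.exists_hasEigenvector
  have hMv : M *ᵥ v = μ • v := by simpa using hv.apply_eq_smul
  obtain ⟨hq_re, hq_im⟩ := RCLike.pos_iff.1 (hW.dotProduct_mulVec_pos hv.2)
  have hWMv : star v ⬝ᵥ (W * M) *ᵥ v = μ * (star v ⬝ᵥ W *ᵥ v) := by
    rw [← mulVec_mulVec, hMv, mulVec_smul, dotProduct_smul, smul_eq_mul]
  have hWMv' : star v ⬝ᵥ (W * M)ᴴ *ᵥ v = star (μ * (star v ⬝ᵥ W *ᵥ v)) := by
    rw [← hWMv, star_dotProduct, star_mulVec, ← dotProduct_mulVec, conjTranspose_conjTranspose]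
  have h := (RCLike.pos_iff.1 (hWM.dotProduct_mulVec_pos hv.2)).1
  rw [neg_mulVec, add_mulVec, dotProduct_neg, dotProduct_add, hWMv, hWMv'] at h
  simp only [map_neg, map_add, RCLike.star_def, RCLike.conj_re, RCLike.mul_re, hq_im] at h
  nlinarith

theorem re_lt_zero_of_mem_spectrum_map_complex_of_posDef {M W : Matrix n n ℝ} (hW : W.PosDef)
    (hWM : (-(W * M + (W * M)ᵀ)).PosDef) {μ : ℂ}
    (hμ : μ ∈ spectrum ℂ (M.map (algebraMap ℝ ℂ))) : μ.re < 0 := by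
  refine re_lt_zero_of_mem_spectrum_of_posDef hW.map_complex ?_ hμ
  rw [← Matrix.map_mul, ← conjTranspose_map (algebraMap ℝ ℂ) fun r => (Complex.conj_ofReal r).symm,
    conjTranspose_eq_transpose_of_trivial]
  have hmap : -((W * M).map (algebraMap ℝ ℂ) + (W * M)ᵀ.map (algebraMap ℝ ℂ))
      = (-(W * M + (W * M)ᵀ)).map (algebraMap ℝ ℂ) := by
    ext i j
    simp
  exact hmap ▸ hWM.map_complex

end Matrix

theorem stmt9_general {d₁ d₂ : ℕ}
    (A : Matrix (Fin d₁) (Fin d₁) ℝ) (D : Matrix (Fin d₂) (Fin d₂) ℝ)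
    (Z : Matrix (Fin d₁) (Fin d₂) ℝ)
    (hA : (-A).PosDef) (hD : (-D).PosDef)
    (τ : ℝ) (hτ : 0 < τ) :
    ∀ μ ∈ spectrum ℂ ((Matrix.fromBlocks A Z (-(τ • Zᵀ)) (τ • D)).map (algebraMap ℝ ℂ)),
      μ.re < 0 := by
  intro μ hμ
  set W : Matrix (Fin d₁ ⊕ Fin d₂) (Fin d₁ ⊕ Fin d₂) ℝ := fromBlocks (τ • 1) 0 0 1
  have hW : W.PosDef := (PosDef.one.smul hτ).fromBlocks_zero_zero PosDef.one
  have hAt : Aᵀ = A := by simpa using hA.isHermitian.eq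
  have hDt : Dᵀ = D := by simpa using hD.isHermitian.eq
  have hsym : -(W * fromBlocks A Z (-(τ • Zᵀ)) (τ • D) + (W * fromBlocks A Z (-(τ • Zᵀ)) (τ • D))ᵀ)
      = (2 * τ) • fromBlocks (-A) 0 0 (-D) := by
    simp [W, fromBlocks_multiply, fromBlocks_transpose, fromBlocks_smul, fromBlocks_neg,
      fromBlocks_add, hAt, hDt, two_mul, add_smul]
  refine re_lt_zero_of_mem_spectrum_map_complex_of_posDef hW ?_ hμ
  rw [hsym]
  exact (hA.fromBlocks_zero_zero hD).smul (by positivity)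

theorem stmt9 {d₁ d₂ : ℕ} (hd₁ : 0 < d₁) (hd₂ : 0 < d₂)
    (A : Matrix (Fin d₁) (Fin d₁) ℝ) (D : Matrix (Fin d₂) (Fin d₂) ℝ)
    (Z : Matrix (Fin d₁) (Fin d₂) ℝ)
    (hA : (-A).PosDef) (hD : (-D).PosDef)
    (τ : ℝ) (hτ : 0 < τ) :
    ∀ μ ∈ spectrum ℂ ((Matrix.fromBlocks A Z (-(τ • Zᵀ)) (τ • D)).map (algebraMap ℝ ℂ)),
      μ.re < 0 :=
  stmt9_general A D Z hA hD τ hτ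
end

section
/- Let d₁, d₂ be positive integers, A a d₁×d₁ real symmetric negative definite matrix, D a d₂×d₂ real symmetric negative definite matrix, and P a d₁×d₂ real matrix. Suppose λmin(−A) · λmin(−D) > ‖P‖², where λmin(−A) and λmin(−D) are the smallest eigenvalues of the positive definite matrices −A and −D, and ‖P‖ is the ℓ²→ℓ² operator norm of P (so ‖P‖² = λmax(PᵀP)). Then for every real τ > 0, the block matrix [[A, P], [τ·Pᵀ, τ·D]] is Hurwitz: every eigenvalue has strictly negative real part. -/
/-!
Factor the matrix as `Λ * J` with `Λ = diag(1, τ)` positive definite and `J = [[A, P], [Pᵀ, D]]`.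
The hypothesis makes `-J` positive definite: for `v = (x, y)`,
`-vᵀJv ≥ a‖x‖² + d‖y‖² - 2‖P‖‖x‖‖y‖ > 0` with `a = λmin(-A)`, `d = λmin(-D)`.
If `ΛJv = μv` with `v ≠ 0`, pairing with `w = Jv` gives `w*Λw = μ · v*Jv`: a positive number is `μ`
times a negative real number, so `Re μ < 0`.
-/

open Matrix

open scoped ComplexOrder

namespace Matrix

lemma sumElim_dotProduct_fromBlocks_mulVec {m n R : Type*} [Fintype m] [Fintype n] [CommRing R]
    (A : Matrix m m R) (P : Matrix m n R) (D : Matrix n n R) (x : m → R) (y : n → R) :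
    Sum.elim x y ⬝ᵥ fromBlocks A P Pᵀ D *ᵥ Sum.elim x y =
      x ⬝ᵥ A *ᵥ x + 2 * (x ⬝ᵥ P *ᵥ y) + y ⬝ᵥ D *ᵥ y := by
  have hPt : y ⬝ᵥ Pᵀ *ᵥ x = x ⬝ᵥ P *ᵥ y := by
    rw [dotProduct_mulVec, vecMul_transpose, dotProduct_comm]
  simp only [fromBlocks_mulVec, Sum.elim_comp_inl, Sum.elim_comp_inr, sumElim_dotProduct_sumElim,
    dotProduct_add, hPt]
  ring

variable {n : Type*} [Fintype n] [DecidableEq n]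

lemma re_lt_zero_of_mem_spectrum_posDef_mul {𝕜 : Type*} [RCLike 𝕜] {Λ J : Matrix n n 𝕜}
    (hΛ : Λ.PosDef) (hJ : (-J).PosDef) {μ : 𝕜} (hμ : μ ∈ spectrum 𝕜 (Λ * J)) :
    RCLike.re μ < 0 := by
  rw [← spectrum_toLin'] at hμ
  obtain ⟨v, hv⟩ := (Module.End.hasEigenvalue_iff_mem_spectrum.mpr hμ).exists_hasEigenvector
  have hΛJv : Λ *ᵥ (J *ᵥ v) = μ • v := by
    rw [mulVec_mulVec, ← toLin'_apply]
    exact hv.apply_eq_smul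
  have hJh : J.IsHermitian := by simpa using hJ.isHermitian.neg
  set q := star v ⬝ᵥ J *ᵥ v
  have hq : RCLike.re q < 0 := by
    have := hJ.re_dotProduct_pos hv.2
    rwa [neg_mulVec, dotProduct_neg, map_neg, neg_pos] at this
  have hJv : J *ᵥ v ≠ 0 := fun h => by simp [q, h] at hq
  have key : star (J *ᵥ v) ⬝ᵥ Λ *ᵥ (J *ᵥ v) = μ * q := by
    rw [hΛJv, dotProduct_smul, smul_eq_mul, star_mulVec, ← dotProduct_mulVec, hJh.eq]
  have hpos := hΛ.re_dotProduct_pos hJv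
  rw [key, RCLike.mul_re, hJh.im_star_dotProduct_mulVec_self, mul_zero, sub_zero] at hpos
  nlinarith

open scoped MatrixOrder in
lemma PosDef.map_algebraMap {𝕜 : Type*} [RCLike 𝕜] {M : Matrix n n ℝ} (hM : M.PosDef) :
    (M.map (algebraMap ℝ 𝕜)).PosDef := by
  obtain ⟨B, rfl⟩ := CStarAlgebra.nonneg_iff_eq_star_mul_self.mp hM.posSemidef.nonneg
  refine PosSemidef.posDef_iff_det_ne_zero ?_ |>.mpr ?_
  · rw [Matrix.map_mul, star_eq_conjTranspose, conjTranspose_map]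
    · exact posSemidef_conjTranspose_mul_self _
    · exact fun x => by simp
  · rw [← RingHom.mapMatrix_apply, ← RingHom.map_det]
    exact (algebraMap ℝ 𝕜).injective.ne_iff' (map_zero _) |>.mpr hM.det_pos.ne'

lemma fromBlocks_smul_bottom_eq_diagonal_mul {m : Type*} [Fintype m] [DecidableEq m]
    (A : Matrix m m ℝ) (P : Matrix m n ℝ) (D : Matrix n n ℝ) (τ : ℝ) :
    fromBlocks A P (τ • Pᵀ) (τ • D) = diagonal (Sum.elim 1 fun _ => τ) * fromBlocks A P Pᵀ D := by
  rw [← fromBlocks_diagonal, fromBlocks_multiply]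
  simp [smul_eq_diagonal_mul]

end Matrix

lemma EuclideanSpace.norm_toLp_sq_eq_dotProduct {n : Type*} [Fintype n] (x : n → ℝ) :
    ‖WithLp.toLp 2 x‖ ^ 2 = x ⬝ᵥ x := by
  rw [← real_inner_self_eq_norm_sq, EuclideanSpace.inner_eq_star_dotProduct]
  rfl

section lamMin

variable {n : Type*} [Fintype n] [DecidableEq n] {B : Matrix n n ℝ}

lemma lamMin_le (hB : B.IsHermitian) (i : n) : lamMin hB ≤ hB.eigenvalues i :=
  ciInf_le (Set.finite_range _).bddBelow i

lemma lamMin_nonneg (hB : B.PosDef) : 0 ≤ lamMin hB.isHermitian :=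
  Real.iInf_nonneg fun i => (hB.eigenvalues_pos i).le

open scoped MatrixOrder in
lemma posSemidef_sub_lamMin_smul_one (hB : B.IsHermitian) : (B - lamMin hB • 1).PosSemidef := by
  rw [← Matrix.le_iff, ← Algebra.algebraMap_eq_smul_one]
  refine (algebraMap_le_iff_le_spectrum hB).mpr fun x hx => ?_
  obtain ⟨i, rfl⟩ := hB.spectrum_real_eq_range_eigenvalues ▸ hx
  exact lamMin_le hB i

lemma lamMin_mul_norm_sq_le_s10 (hB : B.IsHermitian) (x : n → ℝ) :
    lamMin hB * ‖WithLp.toLp 2 x‖ ^ 2 ≤ x ⬝ᵥ B *ᵥ x := by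
  have := (posSemidef_sub_lamMin_smul_one hB).dotProduct_mulVec_nonneg x
  simpa [EuclideanSpace.norm_toLp_sq_eq_dotProduct, sub_mulVec, smul_mulVec, dotProduct_sub]
    using this

end lamMin

lemma dotProduct_mulVec_le_l2OpNorm_mul {m n : ℕ} (P : Matrix (Fin m) (Fin n) ℝ)
    (x : Fin m → ℝ) (y : Fin n → ℝ) :
    x ⬝ᵥ P *ᵥ y ≤ l2OpNorm P * ‖WithLp.toLp 2 x‖ * ‖WithLp.toLp 2 y‖ :=
  calc x ⬝ᵥ P *ᵥ y = inner ℝ (WithLp.toLp 2 x) (WithLp.toLp 2 (P *ᵥ y)) := by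
        rw [EuclideanSpace.inner_eq_star_dotProduct, dotProduct_comm]
        rfl
    _ ≤ ‖WithLp.toLp 2 x‖ * ‖WithLp.toLp 2 (P *ᵥ y)‖ := real_inner_le_norm _ _
    _ ≤ ‖WithLp.toLp 2 x‖ * (l2OpNorm P * ‖WithLp.toLp 2 y‖) := by
        gcongr
        exact (LinearMap.toContinuousLinearMap (Matrix.toEuclideanLin P)).le_opNorm _
    _ = l2OpNorm P * ‖WithLp.toLp 2 x‖ * ‖WithLp.toLp 2 y‖ := by ring

lemma two_mul_mul_lt_of_sq_lt {a d k s t : ℝ} (ha : 0 ≤ a) (h : k ^ 2 < a * d)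
    (hst : s ≠ 0 ∨ t ≠ 0) : 2 * k * s * t < a * s ^ 2 + d * t ^ 2 := by
  have ha : 0 < a := ha.lt_of_ne (by rintro rfl; nlinarith)
  rcases eq_or_ne t 0 with rfl | ht
  · have hs := hst.resolve_right (not_not.mpr rfl)
    simp only [mul_zero, ne_eq, OfNat.ofNat_ne_zero, not_false_eq_true, zero_pow, add_zero]
    positivity
  · have hsq : a * (a * s ^ 2 + d * t ^ 2 - 2 * k * s * t) =
        (a * s - k * t) ^ 2 + (a * d - k ^ 2) * t ^ 2 := by ring
    nlinarith [sq_nonneg (a * s - k * t), mul_pos (sub_pos.mpr h) (pow_pos (abs_pos.mpr ht) 2),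
      sq_abs t]

lemma posDef_neg_fromBlocks {m n : ℕ} {A : Matrix (Fin m) (Fin m) ℝ}
    {D : Matrix (Fin n) (Fin n) ℝ} {P : Matrix (Fin m) (Fin n) ℝ}
    (hA : (-A).PosDef) (hD : (-D).PosDef)
    (hP : l2OpNorm P ^ 2 < lamMin hA.isHermitian * lamMin hD.isHermitian) :
    (-fromBlocks A P Pᵀ D).PosDef := by
  have hAh : A.IsHermitian := by simpa using hA.isHermitian.neg
  have hDh : D.IsHermitian := by simpa using hD.isHermitian.neg
  refine posDef_iff_dotProduct_mulVec.mpr ⟨(hAh.fromBlocks rfl hDh).neg, fun v hv => ?_⟩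
  rw [← Sum.elim_comp_inl_inr v] at hv ⊢
  set x := v ∘ Sum.inl
  set y := v ∘ Sum.inr
  have hxy : ‖WithLp.toLp 2 x‖ ≠ 0 ∨ ‖WithLp.toLp 2 y‖ ≠ 0 := by
    by_contra! h
    simp_all
  have hAx := lamMin_mul_norm_sq_le_s10 hA.isHermitian x
  have hDy := lamMin_mul_norm_sq_le_s10 hD.isHermitian y
  have hPxy := dotProduct_mulVec_le_l2OpNorm_mul P x y
  simp only [star_trivial, neg_mulVec, dotProduct_neg, sumElim_dotProduct_fromBlocks_mulVec]
    at hAx hDy ⊢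
  linarith [two_mul_mul_lt_of_sq_lt (lamMin_nonneg hA) hP hxy]

theorem stmt10_general {d₁ d₂ : ℕ}
    (A : Matrix (Fin d₁) (Fin d₁) ℝ) (D : Matrix (Fin d₂) (Fin d₂) ℝ)
    (P : Matrix (Fin d₁) (Fin d₂) ℝ)
    (hA : (-A).PosDef) (hD : (-D).PosDef)
    (hP : l2OpNorm P ^ 2 < lamMin hA.isHermitian * lamMin hD.isHermitian)
    (τ : ℝ) (hτ : 0 < τ) :
    ∀ μ ∈ spectrum ℂ ((Matrix.fromBlocks A P (τ • Pᵀ) (τ • D)).map (algebraMap ℝ ℂ)),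
      μ.re < 0 := by
  intro μ hμ
  have hΛ : (diagonal (Sum.elim 1 fun _ => τ) : Matrix (Fin d₁ ⊕ Fin d₂) _ ℝ).PosDef :=
    posDef_diagonal_iff.mpr fun i => by cases i <;> simp [hτ]
  rw [fromBlocks_smul_bottom_eq_diagonal_mul, Matrix.map_mul] at hμ
  refine re_lt_zero_of_mem_spectrum_posDef_mul hΛ.map_algebraMap ?_ hμ
  rw [← Matrix.map_neg _ (map_neg _)]
  exact (posDef_neg_fromBlocks hA hD hP).map_algebraMap

theorem stmt10 {d₁ d₂ : ℕ} (hd₁ : 0 < d₁) (hd₂ : 0 < d₂)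
    (A : Matrix (Fin d₁) (Fin d₁) ℝ) (D : Matrix (Fin d₂) (Fin d₂) ℝ)
    (P : Matrix (Fin d₁) (Fin d₂) ℝ)
    (hA : (-A).PosDef) (hD : (-D).PosDef)
    (hP : l2OpNorm P ^ 2 < lamMin hA.isHermitian * lamMin hD.isHermitian)
    (τ : ℝ) (hτ : 0 < τ) :
    ∀ μ ∈ spectrum ℂ ((Matrix.fromBlocks A P (τ • Pᵀ) (τ • D)).map (algebraMap ℝ ℂ)),
      μ.re < 0 :=
  stmt10_general A D P hA hD hP τ hτ
end

section
/- Let n₁ be a positive integer and n₂ a nonnegative integer. Let M₊ be an n₁×n₁ real diagonal positive definite matrix, M₋ an n₂×n₂ real diagonal negative semidefinite matrix, Z₁ an n₁×n₁ real skew-symmetric matrix, Z₃ an n₂×n₂ real skew-symmetric matrix, and Z₂ an n₁×n₂ real matrix. Let J = [[M₊ + Z₁, Z₂], [−Z₂ᵀ, M₋ + Z₃]]. If ‖Z₂‖ < ½·(|λmax(M₋)| + λmin(M₊)) and ½·(|λmax(M₋)| + λmin(M₊)) < λmin(M₊) (i.e., |λmax(M₋)| < λmin(M₊)), then J has an eigenvalue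 with nonnegative real part; in particular the spectrum of J is not contained in the open left half of the complex plane. -/
open Matrix

/-!
Put `r = (λmin(M₊) - |λmax(M₋)|) / 2 > 0` and `H = diag(1, -1)`. The bound on `‖Z₂‖` makes the
quadratic form of `H (J - r)` positive semidefinite, so it suffices that a matrix `A` with
`Re ⟪w, H A w⟫ ≥ 0` for all `w`, and with `⟪w₀, H w₀⟫ > 0` for some `w₀`, has an eigenvalue in the
closed right half-plane. If not, the Cayley transform `C = (A + 1)(A - 1)⁻¹` has its spectrum in
the open unit disc, so `Cᵏ w₀ → 0` by Gelfand's formula; but `w ↦ ⟪w, H w⟫` does not decrease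
under `C`, because `⟪(A + 1)v, H (A + 1)v⟫ - ⟪(A - 1)v, H (A - 1)v⟫ = 4 Re ⟪v, H A v⟫`.
-/

open Filter Topology

theorem tendsto_pow_atTop_nhds_zero_of_spectrum_subset_ball {A : Type*} [NormedRing A]
    [NormedAlgebra ℂ A] [CompleteSpace A] {a : A} (ha : spectrum ℂ a ⊆ Metric.ball 0 1) :
    Tendsto (a ^ ·) atTop (𝓝 0) := by
  cases subsingleton_or_nontrivial A
  · simp [Subsingleton.elim _ (0 : A)]
  obtain ⟨s, hs1, hsρ⟩ : ∃ s : NNReal, s < 1 ∧ spectralRadius ℂ a < s := by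
    have hρ : spectralRadius ℂ a < (1 : NNReal) :=
      spectrum.spectralRadius_lt_of_forall_lt_of_nonempty (spectrum.nonempty a)
        fun z hz => by exact_mod_cast mem_ball_zero_iff.mp (ha hz)
    obtain ⟨s, hρs, hs1⟩ := ENNReal.lt_iff_exists_nnreal_btwn.mp hρ
    exact ⟨s, by exact_mod_cast hs1, hρs⟩
  have hev : ∀ᶠ n : ℕ in atTop, ‖a ^ n‖ ≤ (s : ℝ) ^ n := by
    filter_upwards [(spectrum.pow_nnnorm_pow_one_div_tendsto_nhds_spectralRadius a).eventually
      (gt_mem_nhds hsρ), eventually_ne_atTop 0] with n hn hn0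
    have h := ENNReal.pow_le_pow_left (n := n) hn.le
    rw [← ENNReal.rpow_natCast, ← ENNReal.rpow_mul, one_div,
      inv_mul_cancel₀ (by exact_mod_cast hn0), ENNReal.rpow_one] at h
    exact_mod_cast h
  exact squeeze_zero_norm' hev (tendsto_pow_atTop_nhds_zero_of_lt_one s.2 hs1)

theorem Complex.re_add_one_div_sub_one_nonneg {z : ℂ} (hz : 1 ≤ ‖z‖) :
    0 ≤ ((z + 1) / (z - 1)).re := by
  have hz2 : 1 ≤ z.re * z.re + z.im * z.im := by
    rw [← Complex.normSq_apply, Complex.normSq_eq_norm_sq]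
    nlinarith
  rw [Complex.div_re, ← add_div]
  simp only [Complex.add_re, Complex.sub_re, Complex.one_re, Complex.add_im, Complex.sub_im,
    Complex.one_im]
  exact div_nonneg (by nlinarith) (Complex.normSq_nonneg _)

theorem spectrum_cayley_subset_ball {A : Type*} [Ring A] [Algebra ℂ A] {a : A} (u : Aˣ)
    (hu : (u : A) = a - 1) (ha : ∀ μ ∈ spectrum ℂ a, μ.re < 0) :
    spectrum ℂ ((a + 1) * ((u⁻¹ : Aˣ) : A)) ⊆ Metric.ball 0 1 := by
  intro z hz
  have hcayley : algebraMap ℂ A z - (a + 1) * ↑u⁻¹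
      = ((z - 1) • a - algebraMap ℂ A (z + 1)) * ↑u⁻¹ := by
    calc algebraMap ℂ A z - (a + 1) * ↑u⁻¹
        = algebraMap ℂ A z * ((a - 1) * ↑u⁻¹) - (a + 1) * ↑u⁻¹ := by
          rw [← hu, u.mul_inv, mul_one]
      _ = _ := by simp only [Algebra.smul_def, map_sub, map_add, map_one]; noncomm_ring
  rw [spectrum.mem_iff, hcayley, Units.isUnit_mul_units] at hz
  by_cases hz1 : z = 1
  · subst hz1
    refine absurd ?_ hz
    rw [sub_self, zero_smul, zero_sub, ← map_neg]
    exact (Ne.isUnit (by norm_num)).map (algebraMap ℂ A)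
  have hsub : z - 1 ≠ 0 := sub_ne_zero.mpr hz1
  have hμ : (z + 1) / (z - 1) ∈ spectrum ℂ a := by
    refine fun hunit => hz ?_
    have hfac : (z - 1) • a - algebraMap ℂ A (z + 1)
        = (-(z - 1)) • (algebraMap ℂ A ((z + 1) / (z - 1)) - a) := by
      rw [Algebra.smul_def, Algebra.smul_def, mul_sub, ← map_mul,
        show -(z - 1) * ((z + 1) / (z - 1)) = -(z + 1) by field_simp]
      simp only [map_neg, map_sub, map_add, map_one]
      noncomm_ring
    rw [hfac, Algebra.smul_def]
    exact ((Ne.isUnit (neg_ne_zero.mpr hsub)).map (algebraMap ℂ A)).mul hunit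
  by_contra hz_ge
  rw [Metric.mem_ball, dist_zero_right, not_lt] at hz_ge
  exact (ha _ hμ).not_ge (Complex.re_add_one_div_sub_one_nonneg hz_ge)

namespace Matrix

variable {n : Type*} [Fintype n]

def hermForm (H : Matrix n n ℂ) (w : n → ℂ) : ℝ := (star w ⬝ᵥ H *ᵥ w).re

theorem hermForm_add_sub_hermForm_sub {H : Matrix n n ℂ} (hH : H.IsHermitian) (v w : n → ℂ) :
    hermForm H (v + w) - hermForm H (v - w) = 4 * (star w ⬝ᵥ H *ᵥ v).re := by
  have hsymm : (star v ⬝ᵥ H *ᵥ w).re = (star w ⬝ᵥ H *ᵥ v).re := by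
    rw [← Complex.conj_re, ← RCLike.star_def, star_dotProduct, star_mulVec, star_star, hH.eq,
      dotProduct_mulVec, dotProduct_comm]
  simp only [hermForm, star_add, star_sub, mulVec_add, mulVec_sub, dotProduct_add,
    dotProduct_sub, add_dotProduct, sub_dotProduct, Complex.add_re, Complex.sub_re]
  linarith

theorem continuous_hermForm (H : Matrix n n ℂ) : Continuous (hermForm H) := by
  unfold hermForm
  fun_prop

theorem exists_mem_spectrum_re_nonneg [DecidableEq n] {H A : Matrix n n ℂ} (hH : H.IsHermitian)
    (hHA : ∀ v, 0 ≤ (star v ⬝ᵥ H *ᵥ (A *ᵥ v)).re) {w₀ : n → ℂ} (hw₀ : 0 < hermForm H w₀) :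
    ∃ μ ∈ spectrum ℂ A, 0 ≤ μ.re := by
  by_contra! hneg
  have hunit : IsUnit (A - 1) := by
    have h1 : (1 : ℂ) ∉ spectrum ℂ A := fun h => (hneg 1 h).not_ge zero_le_one
    rw [spectrum.mem_iff, not_not, map_one] at h1
    simpa using h1.neg
  set u := hunit.unit
  have hu : (u : Matrix n n ℂ) = A - 1 := hunit.unit_spec
  set C := (A + 1) * (↑u⁻¹ : Matrix n n ℂ)
  have hC : ∀ w, hermForm H w ≤ hermForm H (C *ᵥ w) := by
    intro w
    set v := (↑u⁻¹ : Matrix n n ℂ) *ᵥ w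
    have hw : A *ᵥ v - v = w := by
      rw [show A *ᵥ v - v = (A - 1) *ᵥ v by rw [sub_mulVec, one_mulVec], ← hu, mulVec_mulVec,
        Units.mul_inv, one_mulVec]
    have hCw : A *ᵥ v + v = C *ᵥ w := by
      rw [show C *ᵥ w = (A + 1) *ᵥ v from (mulVec_mulVec _ _ _).symm, add_mulVec, one_mulVec]
    have := hermForm_add_sub_hermForm_sub hH (A *ᵥ v) v
    rw [hw, hCw] at this
    linarith [hHA v]
  have hmono : ∀ k, hermForm H w₀ ≤ hermForm H ((C ^ k) *ᵥ w₀) := by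
    intro k
    induction k with
    | zero => simp
    | succ k ih => exact ih.trans (by rw [pow_succ', ← mulVec_mulVec]; exact hC _)
  have hlim : Tendsto (fun k => hermForm H ((C ^ k) *ᵥ w₀)) atTop (𝓝 0) := by
    -- any complete algebra norm will do: neither the spectrum nor the topology depends on it
    let _ := Matrix.linftyOpNormedRing (n := n) (α := ℂ)
    let _ := Matrix.linftyOpNormedAlgebra (n := n) (R := ℂ) (α := ℂ)
    have hpow := tendsto_pow_atTop_nhds_zero_of_spectrum_subset_ball
      (spectrum_cayley_subset_ball u hu hneg)
    have hc : Continuous fun M : Matrix n n ℂ => hermForm H (M *ᵥ w₀) :=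
      (continuous_hermForm H).comp (continuous_id.matrix_mulVec continuous_const)
    have := (hc.tendsto 0).comp hpow
    rwa [zero_mulVec, show hermForm H 0 = 0 by simp [hermForm]] at this
  exact hw₀.not_ge (ge_of_tendsto' hlim hmono)

theorem re_star_dotProduct_map_mulVec {m : Type*} [Fintype m] (M : Matrix m n ℝ) (x : m → ℂ)
    (y : n → ℂ) :
    (star x ⬝ᵥ M.map (algebraMap ℝ ℂ) *ᵥ y).re
      = (fun i => (x i).re) ⬝ᵥ M *ᵥ (fun j => (y j).re)
        + (fun i => (x i).im) ⬝ᵥ M *ᵥ (fun j => (y j).im) := by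
  simp only [dotProduct, mulVec, Pi.star_apply, map_apply, Complex.re_sum, Complex.mul_re,
    Complex.mul_im, Complex.coe_algebraMap, Complex.ofReal_re, Complex.ofReal_im,
    RCLike.star_def, Complex.conj_re, Complex.conj_im, Finset.mul_sum, ← Finset.sum_add_distrib]
  refine Finset.sum_congr rfl fun i _ => Finset.sum_congr rfl fun j _ => ?_
  ring

theorem exists_mem_spectrum_map_le_re [DecidableEq n] {H A : Matrix n n ℝ} (hH : H.IsSymm)
    {r : ℝ} (hHA : ∀ v, 0 ≤ v ⬝ᵥ (H * (A - r • 1)) *ᵥ v) {v₀ : n → ℝ}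
    (hv₀ : 0 < v₀ ⬝ᵥ H *ᵥ v₀) :
    ∃ μ ∈ spectrum ℂ (A.map (algebraMap ℝ ℂ)), r ≤ μ.re := by
  obtain ⟨μ, hμ, hre⟩ := exists_mem_spectrum_re_nonneg (H := H.map (algebraMap ℝ ℂ))
    (A := (A - r • 1).map (algebraMap ℝ ℂ)) (w₀ := fun i => (v₀ i : ℂ))
    (by ext i j; simp [hH.apply i j])
    (fun v => by
      rw [mulVec_mulVec, ← Matrix.map_mul, re_star_dotProduct_map_mulVec]
      exact add_nonneg (hHA _) (hHA _))
    (by rw [hermForm, re_star_dotProduct_map_mulVec]; simpa using hv₀)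
  have hshift : (A - r • 1).map (algebraMap ℝ ℂ)
      = A.map (algebraMap ℝ ℂ) - algebraMap ℂ (Matrix n n ℂ) r := by
    ext i j
    by_cases h : i = j <;> simp [h, algebraMap_matrix_apply]
  refine ⟨μ + r, ?_, by simpa using hre⟩
  have := (spectrum.add_mem_add_iff (s := (r : ℂ))).mpr (hshift ▸ hμ)
  rwa [add_sub_cancel] at this

theorem dotProduct_mulVec_self_eq_zero {W : Matrix n n ℝ} (hW : Wᵀ = -W) (v : n → ℝ) :
    v ⬝ᵥ W *ᵥ v = 0 := by
  have h : v ⬝ᵥ Wᵀ *ᵥ v = v ⬝ᵥ W *ᵥ v := by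
    rw [mulVec_transpose, dotProduct_comm, dotProduct_mulVec]
  rw [hW, neg_mulVec, dotProduct_neg] at h
  linarith

theorem fromBlocks_signature_quadForm_nonneg {m₁ m₂ : Type*} [Fintype m₁] [Fintype m₂]
    [DecidableEq m₁] [DecidableEq m₂] {P : Matrix m₁ m₁ ℝ} {S : Matrix m₂ m₂ ℝ}
    {Z : Matrix m₁ m₂ ℝ} {α β ζ : ℝ} (hP : ∀ x, α * (x ⬝ᵥ x) ≤ x ⬝ᵥ P *ᵥ x)
    (hS : ∀ y, y ⬝ᵥ S *ᵥ y ≤ -β * (y ⬝ᵥ y))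
    (hZ : ∀ x y, 2 * |x ⬝ᵥ Z *ᵥ y| ≤ ζ * (x ⬝ᵥ x + y ⬝ᵥ y)) (hζ : ζ ≤ (α + β) / 2)
    (v : m₁ ⊕ m₂ → ℝ) :
    0 ≤ v ⬝ᵥ (fromBlocks 1 0 0 (-1) * (fromBlocks P Z (-Zᵀ) S - ((α - β) / 2) • 1)) *ᵥ v := by
  obtain ⟨x, y, rfl⟩ : ∃ x y, v = Sum.elim x y :=
    ⟨v ∘ Sum.inl, v ∘ Sum.inr, (Sum.elim_comp_inl_inr v).symm⟩
  rw [← fromBlocks_one, fromBlocks_smul, sub_eq_add_neg, fromBlocks_neg, fromBlocks_add,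
    fromBlocks_multiply, fromBlocks_mulVec, sumElim_dotProduct_sumElim]
  have hZt : y ⬝ᵥ Zᵀ *ᵥ x = x ⬝ᵥ Z *ᵥ y := by
    rw [mulVec_transpose, dotProduct_comm, dotProduct_mulVec]
  simp only [one_mul, smul_zero, neg_zero, add_zero, Matrix.mul_neg, Matrix.zero_mul,
    Sum.elim_comp_inl, Matrix.one_mul, Sum.elim_comp_inr, Matrix.neg_mul, neg_neg, zero_add,
    add_mulVec, neg_mulVec, smul_mulVec, one_mulVec, dotProduct_add, dotProduct_neg,
    dotProduct_smul, smul_eq_mul, hZt]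
  have hxy : ζ * (x ⬝ᵥ x + y ⬝ᵥ y) ≤ (α + β) / 2 * (x ⬝ᵥ x + y ⬝ᵥ y) :=
    mul_le_mul_of_nonneg_right hζ
      (add_nonneg (dotProduct_self_star_nonneg x) (dotProduct_self_star_nonneg y))
  linarith [hP x, hS y, hZ x y, neg_abs_le (x ⬝ᵥ Z *ᵥ y)]

end Matrix

section Rayleigh

open scoped MatrixOrder

variable {n : Type*} [Fintype n] [DecidableEq n] {A : Matrix n n ℝ}

theorem lamMin_mul_dotProduct_self_le (hA : A.IsHermitian) (v : n → ℝ) :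
    lamMin hA * (v ⬝ᵥ v) ≤ v ⬝ᵥ A *ᵥ v := by
  have h : algebraMap ℝ (Matrix n n ℝ) (lamMin hA) ≤ A := by
    rw [algebraMap_le_iff_le_spectrum (ha := hA.isSelfAdjoint),
      hA.spectrum_real_eq_range_eigenvalues]
    rintro _ ⟨i, rfl⟩
    exact ciInf_le (Finite.bddBelow_range _) i
  have := (Matrix.le_iff.mp h).dotProduct_mulVec_nonneg v
  rwa [star_trivial, sub_mulVec, dotProduct_sub, Algebra.algebraMap_eq_smul_one, smul_mulVec,
    one_mulVec, dotProduct_smul, smul_eq_mul, sub_nonneg] at this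

theorem dotProduct_mulVec_le_lamMax_mul (hA : A.IsHermitian) (v : n → ℝ) :
    v ⬝ᵥ A *ᵥ v ≤ lamMax hA * (v ⬝ᵥ v) := by
  have h : A ≤ algebraMap ℝ (Matrix n n ℝ) (lamMax hA) := by
    rw [le_algebraMap_iff_spectrum_le (ha := hA.isSelfAdjoint),
      hA.spectrum_real_eq_range_eigenvalues]
    rintro _ ⟨i, rfl⟩
    exact le_ciSup (Finite.bddAbove_range _) i
  have := (Matrix.le_iff.mp h).dotProduct_mulVec_nonneg v
  rwa [star_trivial, sub_mulVec, dotProduct_sub, Algebra.algebraMap_eq_smul_one, smul_mulVec,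
    one_mulVec, dotProduct_smul, smul_eq_mul, sub_nonneg] at this

theorem lamMax_nonpos (hA : A.IsHermitian) (h : (-A).PosSemidef) : lamMax hA ≤ 0 := by
  have hle : A ≤ algebraMap ℝ (Matrix n n ℝ) 0 := by rwa [map_zero, Matrix.le_iff, zero_sub]
  rw [le_algebraMap_iff_spectrum_le (ha := hA.isSelfAdjoint)] at hle
  exact Real.iSup_nonpos fun i => hle _ (hA.eigenvalues_mem_spectrum_real i)

end Rayleigh

theorem two_mul_abs_dotProduct_mulVec_le {k l : ℕ} (Z : Matrix (Fin k) (Fin l) ℝ)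
    (x : Fin k → ℝ) (y : Fin l → ℝ) :
    2 * |x ⬝ᵥ Z *ᵥ y| ≤ l2OpNorm Z * (x ⬝ᵥ x + y ⬝ᵥ y) := by
  set x' := WithLp.toLp 2 x
  set y' := WithLp.toLp 2 y
  have hx : x ⬝ᵥ x = ‖x'‖ ^ 2 := by
    rw [← real_inner_self_eq_norm_sq, EuclideanSpace.inner_toLp_toLp, star_trivial]
  have hy : y ⬝ᵥ y = ‖y'‖ ^ 2 := by
    rw [← real_inner_self_eq_norm_sq, EuclideanSpace.inner_toLp_toLp, star_trivial]
  have hxy : x ⬝ᵥ Z *ᵥ y = inner ℝ x' (toEuclideanLin Z y') := by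
    rw [dotProduct_comm]; rfl
  have hop : ‖toEuclideanLin Z y'‖ ≤ l2OpNorm Z * ‖y'‖ :=
    (LinearMap.toContinuousLinearMap (toEuclideanLin Z)).le_opNorm _
  have hZ : 0 ≤ l2OpNorm Z := norm_nonneg _
  rw [hx, hy, hxy]
  calc 2 * |inner ℝ x' (toEuclideanLin Z y')| ≤ 2 * (‖x'‖ * (l2OpNorm Z * ‖y'‖)) := by
        gcongr
        exact (abs_real_inner_le_norm _ _).trans (by gcongr)
    _ ≤ l2OpNorm Z * (‖x'‖ ^ 2 + ‖y'‖ ^ 2) := by nlinarith [two_mul_le_add_sq ‖x'‖ ‖y'‖]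

theorem stmt11_general {n₁ n₂ : ℕ} (hn₁ : 0 < n₁)
    (Mp : Matrix (Fin n₁) (Fin n₁) ℝ) (Mm : Matrix (Fin n₂) (Fin n₂) ℝ)
    (Z₁ : Matrix (Fin n₁) (Fin n₁) ℝ) (Z₃ : Matrix (Fin n₂) (Fin n₂) ℝ)
    (Z₂ : Matrix (Fin n₁) (Fin n₂) ℝ)
    (hMp : Mp.PosDef)
    (hMmHerm : Mm.IsHermitian) (hMm : (-Mm).PosSemidef)
    (hZ₁ : Z₁ᵀ = -Z₁) (hZ₃ : Z₃ᵀ = -Z₃)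
    (hZ₂ : l2OpNorm Z₂ < (|lamMax hMmHerm| + lamMin hMp.isHermitian) / 2)
    (hgap : (|lamMax hMmHerm| + lamMin hMp.isHermitian) / 2 < lamMin hMp.isHermitian) :
    ∃ μ ∈ spectrum ℂ
        ((Matrix.fromBlocks (Mp + Z₁) Z₂ (-Z₂ᵀ) (Mm + Z₃)).map (algebraMap ℝ ℂ)),
      0 ≤ μ.re := by
  set m := lamMin hMp.isHermitian
  set a := |lamMax hMmHerm|
  have hmax : lamMax hMmHerm = -a := by
    rw [show a = -lamMax hMmHerm from abs_of_nonpos (lamMax_nonpos hMmHerm hMm), neg_neg]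
  have hP : ∀ x, m * (x ⬝ᵥ x) ≤ x ⬝ᵥ (Mp + Z₁) *ᵥ x := fun x => by
    rw [add_mulVec, dotProduct_add, dotProduct_mulVec_self_eq_zero hZ₁, add_zero]
    exact lamMin_mul_dotProduct_self_le _ x
  have hS : ∀ y, y ⬝ᵥ (Mm + Z₃) *ᵥ y ≤ -a * (y ⬝ᵥ y) := fun y => by
    rw [add_mulVec, dotProduct_add, dotProduct_mulVec_self_eq_zero hZ₃, add_zero, ← hmax]
    exact dotProduct_mulVec_le_lamMax_mul _ y
  obtain ⟨μ, hμ, hre⟩ := exists_mem_spectrum_map_le_re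
    (.fromBlocks isSymm_one (by simp) isSymm_one.neg)
    (fromBlocks_signature_quadForm_nonneg hP hS (two_mul_abs_dotProduct_mulVec_le Z₂)
      (by linarith))
    (v₀ := Sum.elim (Pi.single ⟨0, hn₁⟩ 1) 0) (by simp)
  exact ⟨μ, hμ, by linarith⟩

theorem stmt11 {n₁ n₂ : ℕ} (hn₁ : 0 < n₁)
    (Mp : Matrix (Fin n₁) (Fin n₁) ℝ) (Mm : Matrix (Fin n₂) (Fin n₂) ℝ)
    (Z₁ : Matrix (Fin n₁) (Fin n₁) ℝ) (Z₃ : Matrix (Fin n₂) (Fin n₂) ℝ)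
    (Z₂ : Matrix (Fin n₁) (Fin n₂) ℝ)
    (hMpDiag : Mp.IsDiag) (hMp : Mp.PosDef)
    (hMmDiag : Mm.IsDiag) (hMmHerm : Mm.IsHermitian) (hMm : (-Mm).PosSemidef)
    (hZ₁ : Z₁ᵀ = -Z₁) (hZ₃ : Z₃ᵀ = -Z₃)
    (hZ₂ : l2OpNorm Z₂ < (|lamMax hMmHerm| + lamMin hMp.isHermitian) / 2)
    (hgap : (|lamMax hMmHerm| + lamMin hMp.isHermitian) / 2 < lamMin hMp.isHermitian) :
    ∃ μ ∈ spectrum ℂ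
        ((Matrix.fromBlocks (Mp + Z₁) Z₂ (-Z₂ᵀ) (Mm + Z₃)).map (algebraMap ℝ ℂ)),
      0 ≤ μ.re :=
  stmt11_general hn₁ Mp Mm Z₁ Z₃ Z₂ hMp hMmHerm hMm hZ₁ hZ₃ hZ₂ hgap
end
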